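/- arXiv:2304.08906 — 2 statements merged into one kernel-verified Lean document; each statement's English description precedes it below -/
import Mathlib

section
/- Each persistence landscape function is 1-Lipschitz: for a finite family {(a_j, b_j)}_{j∈J} of pairs of real numbers with a_j < b_j and any k ≥ 1, the function λ_k : ℝ → ℝ satisfies |λ_k(s) − λ_k(t)| ≤ |s − t| for all s, t ∈ ℝ. (This is the precise form of the statement that the landscape functions λ_k are piecewise linear with slopes −1, 0, or 1.) -/
/-- The tent function associated to an interval `(a, b)`:
`f_{(a,b)}(t) = max 0 (min (t - a) (b - t))`. -/
noncomputable def tent (a b t : ℝ) : ℝ := max 0 (min (t - a) (b - t))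

/-- The `k`-th largest element of a finite multiset of reals (`k` is
1-indexed), interpreted as `0` if `k` exceeds the cardinality. -/
noncomputable def kthLargest (s : Multiset ℝ) (k : ℕ) : ℝ :=
  (s.sort (· ≥ ·)).getD (k - 1) 0

/-- The `k`-th persistence landscape function of the finite persistence
diagram `{(a j, b j)}_{j ∈ ι}`: the `k`-th largest value among the tent
functions evaluated at `t`. -/
noncomputable def landscape {ι : Type*} [Fintype ι] (a b : ι → ℝ) (k : ℕ)
    (t : ℝ) : ℝ :=
  kthLargest (Multiset.map (fun j => tent (a j) (b j) t) Finset.univ.val) k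

private lemma tent_lipschitz (a b s t : ℝ) : |tent a b s - tent a b t| ≤ |s - t| := by
  unfold tent
  refine (abs_max_sub_max_le_max _ _ _ _).trans ?_
  simp only [sub_self, abs_zero]
  refine max_le (abs_nonneg _) ?_
  refine (abs_min_sub_min_le_max _ _ _ _).trans ?_
  have h1 : (s - a) - (t - a) = s - t := by ring
  have h2 : (b - s) - (b - t) = t - s := by ring
  rw [h1, h2, abs_sub_comm t s, max_self]

private lemma countP_le_of_sorted {l : List ℝ} (hl : l.Pairwise (· ≥ ·)) {i : ℕ}
    (hi : i < l.length) : l.countP (fun y => decide (l[i] < y)) ≤ i := by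
  have hsplit : l = l.take i ++ l.drop i := (List.take_append_drop i l).symm
  have hcount : (l.take i).countP (fun y => decide (l[i] < y))
        + (l.drop i).countP (fun y => decide (l[i] < y))
      = l.countP (fun y => decide (l[i] < y)) := by
    rw [← List.countP_append, List.take_append_drop]
  have h2 : (l.drop i).countP (fun y => decide (l[i] < y)) = 0 := by
    rw [List.countP_eq_zero]
    intro y hy
    obtain ⟨m, hm, rfl⟩ := List.mem_iff_getElem.mp hy
    rw [List.getElem_drop]
    have hle : l[i + m]'(by simp at hm; omega) ≤ l[i] := by
      rcases Nat.eq_zero_or_pos m with rfl | hmpos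
      · simp
      · exact (List.pairwise_iff_getElem.mp hl) i (i + m) hi (by simp at hm; omega)
          (by omega)
    simpa using not_lt_of_ge hle
  have h3 : (l.take i).countP (fun y => decide (l[i] < y)) ≤ i :=
    List.countP_le_length.trans (by simp)
  omega

private lemma le_countP_of_sorted {l : List ℝ} (hl : l.Pairwise (· ≥ ·)) {i : ℕ}
    (hi : i < l.length) {x : ℝ} (hx : x < l[i]) :
    i + 1 ≤ l.countP (fun y => decide (x < y)) := by
  have hsplit : l = l.take (i + 1) ++ l.drop (i + 1) := (List.take_append_drop _ l).symm
  have hcount : (l.take (i + 1)).countP (fun y => decide (x < y))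
        + (l.drop (i + 1)).countP (fun y => decide (x < y))
      = l.countP (fun y => decide (x < y)) := by
    rw [← List.countP_append, List.take_append_drop]
  have hlen : (l.take (i + 1)).length = i + 1 := by
    simp [Nat.min_eq_left (by omega : i + 1 ≤ l.length)]
  have hall : (l.take (i + 1)).countP (fun y => decide (x < y))
      = (l.take (i + 1)).length := by
    rw [List.countP_eq_length]
    intro y hy
    obtain ⟨m, hm, rfl⟩ := List.mem_iff_getElem.mp hy
    rw [List.getElem_take]
    have hmi : m ≤ i := by
      have := hm; rw [hlen] at this; omega
    have hge : l[i] ≤ l[m]'(by omega) := by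
      rcases eq_or_lt_of_le hmi with rfl | hlt
      · simp
      · exact (List.pairwise_iff_getElem.mp hl) m i (by omega) hi hlt
    simpa using lt_of_lt_of_le hx hge
  omega

private lemma card_filter_eq_countP (s : Multiset ℝ) (x : ℝ) :
    Multiset.card (s.filter (x < ·)) =
      (s.sort (· ≥ ·)).countP (fun y => decide (x < y)) := by
  conv_lhs => rw [← Multiset.sort_eq s (· ≥ ·)]
  rw [Multiset.filter_coe, Multiset.coe_card, ← List.countP_eq_length_filter]

private lemma kthLargest_le_of_counts {s t : Multiset ℝ}
    (hcard : Multiset.card s = Multiset.card t)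
    (h : ∀ x : ℝ, Multiset.card (s.filter (x < ·)) ≤ Multiset.card (t.filter (x < ·)))
    (k : ℕ) (hk : 1 ≤ k) : kthLargest s k ≤ kthLargest t k := by
  have hls : (s.sort (· ≥ ·)).length = Multiset.card s := Multiset.length_sort _
  have hlt : (t.sort (· ≥ ·)).length = Multiset.card t := Multiset.length_sort _
  by_cases hin : k - 1 < (s.sort (· ≥ ·)).length
  · have hin' : k - 1 < (t.sort (· ≥ ·)).length := by omega
    rw [kthLargest, kthLargest, List.getD_eq_getElem _ _ hin, List.getD_eq_getElem _ _ hin']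
    by_contra hcon
    push_neg at hcon
    have h1 : k - 1 + 1 ≤ (s.sort (· ≥ ·)).countP
        (fun y => decide ((t.sort (· ≥ ·))[k-1] < y)) :=
      le_countP_of_sorted (Multiset.pairwise_sort _ _) hin hcon
    have h2 : (t.sort (· ≥ ·)).countP
        (fun y => decide ((t.sort (· ≥ ·))[k-1] < y)) ≤ k - 1 :=
      countP_le_of_sorted (Multiset.pairwise_sort _ _) hin'
    have h3 := h ((t.sort (· ≥ ·))[k-1])
    rw [card_filter_eq_countP, card_filter_eq_countP] at h3
    omega
  · have hin' : ¬ k - 1 < (t.sort (· ≥ ·)).length := by omega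
    rw [kthLargest, kthLargest, List.getD_eq_default _ _ (le_of_not_gt hin),
      List.getD_eq_default _ _ (le_of_not_gt hin')]

private lemma kthLargest_map_add_le (s : Multiset ℝ) {c : ℝ} (hc : 0 ≤ c) (k : ℕ) :
    kthLargest (s.map (· + c)) k ≤ kthLargest s k + c := by
  have hmap : (s.sort (· ≥ ·)).map (· + c) = (s.map (· + c)).sort (· ≥ ·) :=
    Multiset.map_sort _ _ _ _ (fun x _ y _ => ⟨fun h => add_le_add_left h c, fun h => le_of_add_le_add_right h⟩)
  by_cases hin : k - 1 < (s.sort (· ≥ ·)).length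
  · have hin' : k - 1 < ((s.map (· + c)).sort (· ≥ ·)).length := by
      rw [← hmap, List.length_map]; exact hin
    rw [kthLargest, kthLargest, List.getD_eq_getElem _ _ hin, List.getD_eq_getElem _ _ hin',
      ← List.getElem_of_eq hmap (by simpa using hin), List.getElem_map]
  · have hin' : ¬ k - 1 < ((s.map (· + c)).sort (· ≥ ·)).length := by
      rw [← hmap, List.length_map]; exact hin
    rw [kthLargest, kthLargest, List.getD_eq_default _ _ (le_of_not_gt hin),
      List.getD_eq_default _ _ (le_of_not_gt hin')]
    linarith

/-- **Persistence landscape functions are 1-Lipschitz**: for every finite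
persistence diagram and every `k ≥ 1`,
`|λ_k(s) - λ_k(t)| ≤ |s - t|` for all `s, t ∈ ℝ`. -/
theorem landscape_lipschitz {ι : Type*} [Fintype ι] (a b : ι → ℝ)
    (hab : ∀ j, a j < b j) (k : ℕ) (hk : 1 ≤ k) (s t : ℝ) :
    |landscape a b k s - landscape a b k t| ≤ |s - t| := by
  have key : ∀ u v : ℝ, landscape a b k u - landscape a b k v ≤ |u - v| := by
    intro u v
    have hc : (0:ℝ) ≤ |u - v| := abs_nonneg _
    have step1 : landscape a b k u ≤
        kthLargest (Multiset.map (fun j => tent (a j) (b j) v + |u - v|)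
          Finset.univ.val) k := by
      apply kthLargest_le_of_counts _ _ k hk
      · simp
      · intro x
        rw [Multiset.filter_map, Multiset.filter_map]
        simp only [Multiset.card_map]
        apply Multiset.card_le_card
        apply Multiset.monotone_filter_right
        intro j hj
        have htl := tent_lipschitz (a j) (b j) u v
        have : tent (a j) (b j) u - tent (a j) (b j) v ≤ |u - v| :=
          (le_abs_self _).trans htl
        simp only [Function.comp_apply] at hj ⊢
        linarith
    have step2 : kthLargest (Multiset.map (fun j => tent (a j) (b j) v + |u - v|)
        Finset.univ.val) k ≤ landscape a b k v + |u - v| := by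
      have heq : Multiset.map (fun j => tent (a j) (b j) v + |u - v|) Finset.univ.val
          = (Multiset.map (fun j => tent (a j) (b j) v) Finset.univ.val).map
              (· + |u - v|) := by
        rw [Multiset.map_map]; rfl
      rw [heq]
      exact kthLargest_map_add_le _ hc k
    unfold landscape at *
    linarith
  rw [abs_sub_le_iff]
  refine ⟨key s t, ?_⟩
  have := key t s
  rwa [abs_sub_comm] at this
end

section
/- Single-interval landscape stability: for real numbers a < b and a' < b' and every t ∈ ℝ, |f_{(a,b)}(t) − f_{(a',b')}(t)| ≤ max(|a − a'|, |b − b'|); that is, the sup-norm distance between the two tent functions is at most the cost max(|a − a'|, |b − b'|) of matching the point (a, b) with the point (a', b'). -/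
lemma tent_le_aux (a b a' b' t : ℝ) :
    tent a b t ≤ tent a' b' t + max |a - a'| |b - b'| := by
  unfold tent
  have h1 : a - a' ≤ |a - a'| := le_abs_self _
  have h1' : a' - a ≤ |a - a'| := by rw [abs_sub_comm]; exact le_abs_self _
  have h2 : b' - b ≤ |b - b'| := by rw [abs_sub_comm]; exact le_abs_self _
  have h2' : b - b' ≤ |b - b'| := le_abs_self _
  have h3 : |a - a'| ≤ max |a - a'| |b - b'| := le_max_left _ _
  have h4 : |b - b'| ≤ max |a - a'| |b - b'| := le_max_right _ _
  have h0 : (0:ℝ) ≤ max |a - a'| |b - b'| := le_trans (abs_nonneg _) h3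
  rcases le_total (t - a) (b - t) with h | h <;>
  rcases le_total (t - a') (b' - t) with h' | h' <;>
  simp only [min_eq_left h, min_eq_right h, min_eq_left h', min_eq_right h'] <;>
  exact max_le (add_nonneg (le_max_left _ _) h0)
    (le_trans (by linarith) (add_le_add_left (le_max_right 0 _) _))

/-- **Single-interval landscape stability**: for `a < b` and `a' < b'`,
`|f_{(a,b)}(t) - f_{(a',b')}(t)| ≤ max |a - a'| |b - b'|` for every `t`. -/
theorem tent_stability (a b a' b' t : ℝ) (hab : a < b) (hab' : a' < b') :
    |tent a b t - tent a' b' t| ≤ max |a - a'| |b - b'| := by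
  rw [abs_sub_le_iff]
  constructor
  · linarith [tent_le_aux a b a' b' t]
  · have := tent_le_aux a' b' a b t
    rw [abs_sub_comm a' a, abs_sub_comm b' b] at this
    linarith
end
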